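/- Let S be a set of n points in general position in the plane, and let a, b ∈ S be two non-consecutive vertices on the boundary of the convex hull of S (i.e., ab is a diagonal, not an edge, of the convex hull). If s, t ∈ S lie in the same closed halfplane determined by the line through a and b, then there is no plane Hamiltonian path on S with endpoints s and t that contains the segment ab as an edge. -/

import Mathlib

/-!
Let `f = det3 a b` and split the path at its edge `ab` into the part `P` before it and the part
`Q` after it. An edge `xy ≠ ab` with `f x * f y < 0` would meet the line `ab` in a point of the
convex hull of `S`, hence, `a` and `b` being extreme points, in a point of the segment `ab`, and
would cross the edge `ab`. So `f`, which vanishes on `S` only at `a` and `b` by general position,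
has constant sign along `P` and along `Q`. As both open sides of `ab` contain points of `S`, the
parts `P` and `Q` lie strictly on opposite sides, and so do the endpoints `s ∈ P` and `t ∈ Q`.
-/

open Set
open scoped Classical

noncomputable section

/-- Points in the plane. -/
abbrev Pt : Type := ℝ × ℝ

/-- Orientation determinant of the triple `(a, b, p)`:
positive iff `p` lies strictly to the left of the directed line from `a` to `b`. -/
def det3 (a b p : Pt) : ℝ :=
  (b.1 - a.1) * (p.2 - a.2) - (b.2 - a.2) * (p.1 - a.1)

/-- A finite point set is in general position if no three of its points are collinear. -/
def GenPos (S : Finset Pt) : Prop :=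
  ∀ p ∈ S, ∀ q ∈ S, ∀ r ∈ S,
    p ≠ q → p ≠ r → q ≠ r → ¬ Collinear ℝ ({p, q, r} : Set Pt)

/-- The list of (directed) edges of a polygonal path given by its list of vertices. -/
def edgeList (l : List Pt) : List (Pt × Pt) := l.zip l.tail

/-- The segment `ab` is an edge of the path `l`, i.e. `a` and `b` are consecutive on `l`. -/
def IsEdgeOf (a b : Pt) (l : List Pt) : Prop :=
  (a, b) ∈ edgeList l ∨ (b, a) ∈ edgeList l

/-- `l` is a plane (crossing-free) Hamiltonian path on the point set `S`:
its vertices are exactly the points of `S`, each visited once, and any two distinct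
edges intersect only in common endpoints. -/
def PlanePath (S : Finset Pt) (l : List Pt) : Prop :=
  l.Nodup ∧ l.toFinset = S ∧
  ∀ e ∈ edgeList l, ∀ f ∈ edgeList l, e ≠ f →
    segment ℝ e.1 e.2 ∩ segment ℝ f.1 f.2 ⊆
      (({e.1, e.2} : Set Pt) ∩ ({f.1, f.2} : Set Pt))

/-- Two paths are edge-disjoint: no segment is an edge of both. -/
def EdgeDisjoint (l₁ l₂ : List Pt) : Prop :=
  ∀ x y : Pt, IsEdgeOf x y l₁ → ¬ IsEdgeOf x y l₂

/-- `p` is a vertex of the boundary of the convex hull of `S`. -/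
def HullVertex (S : Finset Pt) (p : Pt) : Prop :=
  p ∈ Set.extremePoints ℝ (convexHull ℝ (S : Set Pt))

/-- `ab` is an edge of the boundary of the convex hull of `S`, i.e. `a` and `b` are
consecutive hull vertices: all other points of `S` lie strictly on one side of line `ab`. -/
def IsHullEdge (S : Finset Pt) (a b : Pt) : Prop :=
  a ∈ S ∧ b ∈ S ∧ a ≠ b ∧
  ((∀ p ∈ S, p ≠ a → p ≠ b → 0 < det3 a b p) ∨
   (∀ p ∈ S, p ≠ a → p ≠ b → det3 a b p < 0))

/-- The segment `xy` is a bridge over the line through `a` and `b`: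
it crosses the line `ℓ(ab)` but not the segment `ab`. -/
def IsBridge (a b x y : Pt) : Prop :=
  det3 a b x * det3 a b y < 0 ∧ segment ℝ x y ∩ segment ℝ a b = ∅

/-- The set of common edges of the two paths is exactly the segment `ab`. -/
def SharesExactly (a b : Pt) (l₁ l₂ : List Pt) : Prop :=
  IsEdgeOf a b l₁ ∧ IsEdgeOf a b l₂ ∧
  ∀ x y : Pt, IsEdgeOf x y l₁ → IsEdgeOf x y l₂ → ({x, y} : Set Pt) = ({a, b} : Set Pt)


theorem det3_self_left (a b : Pt) : det3 a b a = 0 := by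
  simp [det3]

theorem det3_self_right (a b : Pt) : det3 a b b = 0 := by
  simp only [det3]; ring

theorem det3_swap_mul_det3_swap (a b x y : Pt) :
    det3 b a x * det3 b a y = det3 a b x * det3 a b y := by
  simp only [det3]; ring

theorem det3_add_smul {a b x y : Pt} {α β : ℝ} (hαβ : α + β = 1) :
    det3 a b (α • x + β • y) = α * det3 a b x + β * det3 a b y := by
  simp only [det3, Prod.fst_add, Prod.snd_add, Prod.smul_fst, Prod.smul_snd, smul_eq_mul]
  linear_combination ((b.1 - a.1) * a.2 - (b.2 - a.2) * a.1) * hαβ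

theorem collinear_of_det3_eq_zero {a b p : Pt} (h : det3 a b p = 0) :
    Collinear ℝ ({a, b, p} : Set Pt) := by
  rcases eq_or_ne a b with rfl | hab
  · simpa using collinear_pair ℝ a p
  have hn : (b.1 - a.1) ^ 2 + (b.2 - a.2) ^ 2 ≠ 0 := by
    intro h0
    apply hab
    ext <;> nlinarith [sq_nonneg (b.1 - a.1), sq_nonneg (b.2 - a.2)]
  -- `p` is the point of parameter `⟪p - a, b - a⟫ / ‖b - a‖²` on the line `ab`
  set r := ((p.1 - a.1) * (b.1 - a.1) + (p.2 - a.2) * (b.2 - a.2)) /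
    ((b.1 - a.1) ^ 2 + (b.2 - a.2) ^ 2)
  have hp : AffineMap.lineMap a b r = p := by
    simp only [det3] at h
    ext <;> simp only [AffineMap.lineMap_apply_module, Prod.fst_add, Prod.snd_add,
      Prod.smul_fst, Prod.smul_snd, smul_eq_mul, r] <;> field_simp
    · linear_combination (b.2 - a.2) * h
    · linear_combination -(b.1 - a.1) * h
  have :=
    collinear_insert_of_mem_affineSpan_pair (hp ▸ AffineMap.lineMap_mem_affineSpan_pair r a b)
  rwa [Set.insert_comm, Set.pair_comm] at this

theorem det3_ne_zero_of_genPos {S : Finset Pt} (hgp : GenPos S) {a b p : Pt}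
    (ha : a ∈ S) (hb : b ∈ S) (hp : p ∈ S) (hab : a ≠ b) (hpa : p ≠ a) (hpb : p ≠ b) :
    det3 a b p ≠ 0 := fun h ↦
  hgp a ha b hb p hp hab hpa.symm hpb.symm (collinear_of_det3_eq_zero h)

theorem exists_mem_segment_det3_eq_zero {a b x y : Pt} (h : det3 a b x * det3 a b y < 0) :
    ∃ z ∈ segment ℝ x y, det3 a b z = 0 := by
  -- the root `t = f x / (f x - f y)` of `(1 - t) * f x + t * f y`, with both terms of the
  -- fraction multiplied by `f x` so that they are nonnegative
  set u := -(det3 a b x * det3 a b y)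
  set v := det3 a b x ^ 2
  have hu : 0 < u := neg_pos.2 h
  have hv : 0 ≤ v := sq_nonneg _
  have huv : 0 < u + v := by positivity
  refine ⟨(u / (u + v)) • x + (v / (u + v)) • y,
    ⟨_, _, div_nonneg hu.le huv.le, div_nonneg hv huv.le, by field_simp, rfl⟩, ?_⟩
  rw [det3_add_smul (by field_simp)]
  field_simp
  ring

theorem mem_segment_of_det3_eq_zero {A : Set Pt} {a b z : Pt} (hab : a ≠ b)
    (ha : a ∈ A.extremePoints ℝ) (hb : b ∈ A.extremePoints ℝ) (hz : z ∈ A)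
    (h : det3 a b z = 0) : z ∈ segment ℝ a b := by
  rw [mem_extremePoints_iff_forall_segment] at ha hb
  rcases (collinear_of_det3_eq_zero h).wbtw_or_wbtw_or_wbtw with habz | hbza | hzab
  · obtain rfl | rfl := hb.2 a ha.1 z hz (mem_segment_iff_wbtw.2 habz)
    · exact absurd rfl hab
    · exact right_mem_segment ℝ a _
  · exact segment_symm ℝ b a ▸ mem_segment_iff_wbtw.2 hbza
  · obtain rfl | rfl := ha.2 z hz b hb.1 (mem_segment_iff_wbtw.2 hzab)
    · exact left_mem_segment ℝ _ b
    · exact absurd rfl hab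

theorem mem_edgeList_iff_infix {x y : Pt} :
    ∀ {l : List Pt}, (x, y) ∈ edgeList l ↔ [x, y] <:+: l
  | [] => by simp [edgeList]
  | [u] => by simpa [edgeList] using fun h : [x, y] <:+: [u] ↦ h.length_le
  | u :: v :: l => by
    have : edgeList (u :: v :: l) = (u, v) :: edgeList (v :: l) := rfl
    rw [this, List.mem_cons, mem_edgeList_iff_infix, List.infix_cons_iff (l₂ := v :: l)]
    simp

theorem PlanePath.mem_of_mem {S : Finset Pt} {l : List Pt} (hl : PlanePath S l) {x : Pt}
    (hx : x ∈ l) : x ∈ S :=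
  hl.2.1 ▸ List.mem_toFinset.2 hx

theorem PlanePath.det3_mul_nonneg {S : Finset Pt} {l : List Pt} (hl : PlanePath S l)
    {a b x y : Pt} (hab : a ≠ b) (hav : HullVertex S a) (hbv : HullVertex S b)
    (habl : (a, b) ∈ edgeList l) (hxy : (x, y) ∈ edgeList l) :
    0 ≤ det3 a b x * det3 a b y := by
  by_contra! hneg
  have hxyl := mem_edgeList_iff_infix.1 hxy
  have hne : (x, y) ≠ (a, b) := by
    rintro ⟨⟩
    simp [det3_self_left] at hneg
  obtain ⟨z, hzxy, hz⟩ := exists_mem_segment_det3_eq_zero hneg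
  have hzab : z ∈ segment ℝ a b := mem_segment_of_det3_eq_zero hab hav hbv
    (segment_subset_convexHull (hl.mem_of_mem (hxyl.subset (by simp)))
      (hl.mem_of_mem (hxyl.subset (by simp))) hzxy) hz
  rcases (hl.2.2 (x, y) hxy (a, b) habl hne ⟨hzxy, hzab⟩).1 with rfl | rfl <;>
    simp [hz] at hneg

def StrictSameSide (a b x y : Pt) : Prop :=
  0 < det3 a b x * det3 a b y

theorem StrictSameSide.symm {a b x y : Pt} (h : StrictSameSide a b x y) :
    StrictSameSide a b y x := by
  rwa [StrictSameSide, mul_comm]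

theorem StrictSameSide.trans {a b x y z : Pt} (hxy : StrictSameSide a b x y)
    (hyz : StrictSameSide a b y z) : StrictSameSide a b x z :=
  pos_of_mul_pos_left (by nlinarith [mul_pos hxy hyz]) (sq_nonneg (det3 a b y))

theorem det3_mul_neg_of_strictSameSide {a b s t x y : Pt} (hsx : StrictSameSide a b s x)
    (hxy : det3 a b x * det3 a b y < 0) (hyt : StrictSameSide a b y t) :
    det3 a b s * det3 a b t < 0 :=
  have h := mul_neg_of_neg_of_pos (mul_neg_of_pos_of_neg hsx hxy) hyt
  neg_of_mul_neg_right (by linarith) (sq_nonneg (det3 a b x * det3 a b y))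

instance (a b : Pt) : Std.Symm (StrictSameSide a b) := ⟨fun _ _ ↦ StrictSameSide.symm⟩

instance (a b : Pt) : Trans (StrictSameSide a b) (StrictSameSide a b) (StrictSameSide a b) :=
  ⟨StrictSameSide.trans⟩

theorem PlanePath.strictSameSide_of_infix {S : Finset Pt} (hgp : GenPos S) {l : List Pt}
    (hl : PlanePath S l) {a b : Pt} (ha : a ∈ S) (hb : b ∈ S) (hab : a ≠ b)
    (hav : HullVertex S a) (hbv : HullVertex S b) (habl : (a, b) ∈ edgeList l)
    {M : List Pt} (hM : M <:+: l) (haM : a ∉ M) (hbM : b ∉ M) :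
    ∀ x ∈ M, ∀ y ∈ M, StrictSameSide a b x y := by
  have hnz : ∀ x ∈ M, det3 a b x ≠ 0 := fun x hx ↦
    det3_ne_zero_of_genPos hgp ha hb (hl.mem_of_mem (hM.subset hx)) hab
      (ne_of_mem_of_not_mem hx haM) (ne_of_mem_of_not_mem hx hbM)
  have hchain : M.IsChain (StrictSameSide a b) := by
    refine List.isChain_iff_forall_rel_of_append_cons_cons.2 fun x y M₁ M₂ hM' ↦ ?_
    have hxyM : [x, y] <:+: M := ⟨M₁, M₂, by simp [hM']⟩
    have hxM : x ∈ M := hxyM.subset (by simp)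
    have hyM : y ∈ M := hxyM.subset (by simp)
    exact (hl.det3_mul_nonneg hab hav hbv habl
      (mem_edgeList_iff_infix.2 (hxyM.trans hM))).lt_of_ne
      (mul_ne_zero (hnz x hxM) (hnz y hyM)).symm
  exact fun x hx y hy ↦
    hchain.pairwise.forall_of_forall (fun x hx ↦ mul_self_pos.2 (hnz x hx)) hx hy

theorem PlanePath.det3_mul_det3_neg_of_mem_edgeList {S : Finset Pt} (hgp : GenPos S)
    {l : List Pt} (hl : PlanePath S l) {a b : Pt} (ha : a ∈ S) (hb : b ∈ S) (hab : a ≠ b)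
    (hav : HullVertex S a) (hbv : HullVertex S b) (habl : (a, b) ∈ edgeList l)
    {p q : Pt} (hp : p ∈ S) (hq : q ∈ S) (hpq : det3 a b p * det3 a b q < 0)
    {s t : Pt} (hhead : l.head? = some s) (hlast : l.getLast? = some t) :
    det3 a b s * det3 a b t < 0 := by
  obtain ⟨P, Q, rfl⟩ := mem_edgeList_iff_infix.1 habl
  have hdP : P.Disjoint ([a, b] ++ Q) := List.disjoint_of_nodup_append (by simpa using hl.1)
  have hdQ : (P ++ [a, b]).Disjoint Q := List.disjoint_of_nodup_append hl.1
  have hP := hl.strictSameSide_of_infix hgp ha hb hab hav hbv habl ⟨[], [a, b] ++ Q, by simp⟩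
    (fun h ↦ hdP h (by simp)) (fun h ↦ hdP h (by simp))
  have hQ := hl.strictSameSide_of_infix hgp ha hb hab hav hbv habl ⟨P ++ [a, b], [], by simp⟩
    (hdQ (by simp)) (hdQ (by simp))
  have hsides : ∀ x ∈ P, ∀ y ∈ Q,
      det3 a b x * det3 a b y < 0 → det3 a b s * det3 a b t < 0 := by
    intro x hx y hy hxy
    have hs : s ∈ P := List.mem_of_mem_head? <| by
      rwa [List.append_assoc, List.head?_append_of_ne_nil P (List.ne_nil_of_mem hx)] at hhead
    have ht : t ∈ Q := List.mem_of_getLast? <| by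
      rwa [List.getLast?_append_of_ne_nil _ (List.ne_nil_of_mem hy)] at hlast
    exact det3_mul_neg_of_strictSameSide (hP s hs x hx) hxy (hQ y hy t ht)
  have hPQ : ∀ x ∈ S, det3 a b x ≠ 0 → x ∈ P ∨ x ∈ Q := by
    intro x hx hx0
    rw [← hl.2.1, List.mem_toFinset] at hx
    simp only [List.mem_append, List.mem_cons, List.not_mem_nil, or_false] at hx
    rcases hx with (hx | rfl | rfl) | hx
    exacts [.inl hx, absurd (det3_self_left x b) hx0, absurd (det3_self_right a x) hx0, .inr hx]
  rcases hPQ p hp (left_ne_zero_of_mul hpq.ne) with hpP | hpQ <;>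
    rcases hPQ q hq (right_ne_zero_of_mul hpq.ne) with hqP | hqQ
  · exact absurd hpq (hP p hpP q hqP).not_gt
  · exact hsides p hpP q hqQ hpq
  · exact hsides q hqP p hpQ (mul_comm (det3 a b p) _ ▸ hpq)
  · exact absurd hpq (hQ p hpQ q hqQ).not_gt

theorem stmt_4_general (S : Finset Pt) (hgp : GenPos S)
    (a b : Pt) (ha : a ∈ S) (hb : b ∈ S) (hab : a ≠ b)
    (hav : HullVertex S a) (hbv : HullVertex S b)
    (hup : ∃ p ∈ S, 0 < det3 a b p) (hdown : ∃ p ∈ S, det3 a b p < 0)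
    (s t : Pt)
    (hside : 0 ≤ det3 a b s * det3 a b t) :
    ¬ ∃ l : List Pt, PlanePath S l ∧ l.head? = some s ∧ l.getLast? = some t ∧
      IsEdgeOf a b l := by
  obtain ⟨p, hp, hp0⟩ := hup
  obtain ⟨q, hq, hq0⟩ := hdown
  have hpq : det3 a b p * det3 a b q < 0 := mul_neg_of_pos_of_neg hp0 hq0
  rintro ⟨l, hl, hhead, hlast, habl | hbal⟩
  · exact hside.not_gt <|
      hl.det3_mul_det3_neg_of_mem_edgeList hgp ha hb hab hav hbv habl hp hq hpq hhead hlast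
  · rw [← det3_swap_mul_det3_swap] at hpq hside
    exact hside.not_gt <| hl.det3_mul_det3_neg_of_mem_edgeList hgp hb ha hab.symm hbv hav hbal
      hp hq hpq hhead hlast

/-- If `a, b` are non-consecutive hull vertices (both open halfplanes of the
line `ab` contain points of `S`) and `s, t` lie in the same closed halfplane of `ℓ(ab)`,
then no plane Hamiltonian path with endpoints `s, t` contains the segment `ab` as an edge. -/
theorem stmt_4 (S : Finset Pt) (hgp : GenPos S)
    (a b : Pt) (ha : a ∈ S) (hb : b ∈ S) (hab : a ≠ b)
    (hav : HullVertex S a) (hbv : HullVertex S b)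
    (hup : ∃ p ∈ S, 0 < det3 a b p) (hdown : ∃ p ∈ S, det3 a b p < 0)
    (s t : Pt) (hs : s ∈ S) (ht : t ∈ S)
    (hside : 0 ≤ det3 a b s * det3 a b t) :
    ¬ ∃ l : List Pt, PlanePath S l ∧ l.head? = some s ∧ l.getLast? = some t ∧
      IsEdgeOf a b l :=
  stmt_4_general S hgp a b ha hb hab hav hbv hup hdown s t hside
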